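/- Suppose 0 < M < 1 and q ≥ 0, and let z = (z₁, 0, z₋₁) ∈ 𝔸ᵗʷᵒ_M be the two-component ground state. If z is moreover a ground state of the full problem (ℰ_q[z] ≤ ℰ_q[v] for all v ∈ 𝔸_M), then, with τ = (1+M)/(1−M), the inequality 4β_s ∫ z₁ z₋₁ (z₁ − z₋₁)(τ z₋₁ − z₁) ≥ q(1+M) + ∫ τ S(z₁, z₋₁)/(z₁² + τ z₋₁²) holds, and in particular the integrand τ S(z₁,z₋₁)/(z₁² + τ z₋₁²) is integrable. -/

import Mathlib

open MeasureTheory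
open scoped RealInnerProductSpace

noncomputable section

abbrev E3 := EuclideanSpace ℝ (Fin 3)

/-- Pointwise squared norm `|u|² = u₁² + u₀² + u₋₁²` of a triple of functions. -/
def nsq (u1 u0 um1 : E3 → ℝ) (x : E3) : ℝ := u1 x ^ 2 + u0 x ^ 2 + um1 x ^ 2

/-- The energy functional `ℰ_q[u]`. -/
def energy (V : E3 → ℝ) (βn βs q : ℝ) (u1 u0 um1 : E3 → ℝ) : ℝ :=
  ∫ x : E3,
    (‖gradient u1 x‖ ^ 2 + ‖gradient u0 x‖ ^ 2 + ‖gradient um1 x‖ ^ 2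
      + V x * nsq u1 u0 um1 x
      + βn * (nsq u1 u0 um1 x) ^ 2
      + βs * (2 * u0 x ^ 2 * (u1 x - um1 x) ^ 2 + (u1 x ^ 2 - um1 x ^ 2) ^ 2)
      + q * (u1 x ^ 2 + um1 x ^ 2))

/-- The admissible class `𝔸_M`: triples of nonnegative `C¹` functions with the
required integrability and the constraints `𝒩[u] = 1`, `ℳ[u] = M`. -/
structure Admissible (V : E3 → ℝ) (M : ℝ) (u1 u0 um1 : E3 → ℝ) : Prop where
  smooth1 : ContDiff ℝ 1 u1
  smooth0 : ContDiff ℝ 1 u0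
  smoothm1 : ContDiff ℝ 1 um1
  nonneg1 : ∀ x, 0 ≤ u1 x
  nonneg0 : ∀ x, 0 ≤ u0 x
  nonnegm1 : ∀ x, 0 ≤ um1 x
  l2_1 : Integrable (fun x => u1 x ^ 2)
  l2_0 : Integrable (fun x => u0 x ^ 2)
  l2_m1 : Integrable (fun x => um1 x ^ 2)
  grad2_1 : Integrable (fun x => ‖gradient u1 x‖ ^ 2)
  grad2_0 : Integrable (fun x => ‖gradient u0 x‖ ^ 2)
  grad2_m1 : Integrable (fun x => ‖gradient um1 x‖ ^ 2)
  l4_1 : Integrable (fun x => u1 x ^ 4)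
  l4_0 : Integrable (fun x => u0 x ^ 4)
  l4_m1 : Integrable (fun x => um1 x ^ 4)
  pot : Integrable (fun x => V x * nsq u1 u0 um1 x)
  mass : ∫ x : E3, nsq u1 u0 um1 x = 1
  magnetization : ∫ x : E3, (u1 x ^ 2 - um1 x ^ 2) = M

/-- Hypotheses on the trap potential `V`: measurable, nonnegative, locally bounded,
and tending to infinity at infinity. -/
structure TrapPotential (V : E3 → ℝ) : Prop where
  meas : Measurable V
  nonneg : ∀ x, 0 ≤ V x
  bddOnBalls : ∀ r : ℝ, ∃ C : ℝ, ∀ x : E3, ‖x‖ ≤ r → V x ≤ C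
  tendsToInfty : ∀ C : ℝ, 0 < C → ∃ R : ℝ, 0 < R ∧ ∀ x : E3, R ≤ ‖x‖ → C ≤ V x

/-- `u` is a ground state: admissible and minimizes the energy over `𝔸_M`. -/
def IsGroundState (V : E3 → ℝ) (βn βs q M : ℝ) (u1 u0 um1 : E3 → ℝ) : Prop :=
  Admissible V M u1 u0 um1 ∧
    ∀ v1 v0 vm1 : E3 → ℝ, Admissible V M v1 v0 vm1 →
      energy V βn βs q u1 u0 um1 ≤ energy V βn βs q v1 v0 vm1

/-- `S(f,g) = |f ∇g − g ∇f|²`. -/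
def Sfun (f g : E3 → ℝ) (x : E3) : ℝ := ‖f x • gradient g x - g x • gradient f x‖ ^ 2

/-!
Test the minimality of `z` among all three-component states against
`v_ε = (√(1 - ε) z₁, √ε W, √(1 - ετ) z₋₁)` with `W = √(z₁² + τ z₋₁²)`: it moves mass from the
outer components into the middle one, and `τ = (1 + M)/(1 - M)` is exactly the ratio that keeps
both the mass and the magnetization. `W` is `C¹` because nonnegative `C¹` functions have vanishing
derivative at their zeros, and Lagrange's identity gives
`|∇W|² = |∇z₁|² + τ|∇z₋₁|² - τ S(z₁, z₋₁)/W²`. Hence `ℰ_q[v_ε] - ℰ_q[z]` is `ε` times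
`A - ε βs B - 4 βs (√(1 - ε)√(1 - ετ) - 1) C`, whose limit as `ε → 0⁺` is the difference `A`
of the two sides of the inequality, so `A ≥ 0`.
-/

open Filter Topology Asymptotics

lemma norm_add_smul_sq_add_mul_norm_sub_smul_sq {F : Type*} [NormedAddCommGroup F]
    [InnerProductSpace ℝ F] (a b τ : ℝ) (u v : F) :
    ‖a • u + (τ * b) • v‖ ^ 2 + τ * ‖a • v - b • u‖ ^ 2
      = (a ^ 2 + τ * b ^ 2) * (‖u‖ ^ 2 + τ * ‖v‖ ^ 2) := by
  rw [norm_add_sq_real, norm_sub_sq_real, norm_smul, norm_smul, norm_smul, norm_smul,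
    inner_smul_left, inner_smul_right, inner_smul_left, inner_smul_right, real_inner_comm u v]
  simp only [Real.norm_eq_abs, mul_pow, sq_abs, conj_trivial]
  ring

section Squeeze

variable {E : Type*} [NormedAddCommGroup E] [NormedSpace ℝ E]

lemma hasFDerivAt_zero_of_nonneg_of_le {φ ψ : E → ℝ} {x : E} (hφ : ∀ y, 0 ≤ φ y)
    (hφψ : ∀ y, φ y ≤ ψ y) (hψx : ψ x = 0) (hψ : HasFDerivAt ψ (0 : E →L[ℝ] ℝ) x) :
    HasFDerivAt φ (0 : E →L[ℝ] ℝ) x := by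
  have hφx : φ x = 0 := le_antisymm (hψx ▸ hφψ x) (hφ x)
  rw [hasFDerivAt_iff_isLittleO_nhds_zero] at hψ ⊢
  simp only [hφx, hψx, sub_zero, zero_apply] at hψ ⊢
  refine (isBigO_of_le _ fun h => ?_).trans_isLittleO hψ
  rw [Real.norm_of_nonneg (hφ _), Real.norm_of_nonneg ((hφ _).trans (hφψ _))]
  exact hφψ _

lemma fderiv_eq_zero_of_nonneg_of_eq_zero {f : E → ℝ} (hf : ∀ y, 0 ≤ f y) {x : E}
    (hx : f x = 0) : fderiv ℝ f x = 0 :=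
  IsLocalMin.fderiv_eq_zero (Eventually.of_forall fun y => hx ▸ hf y)

end Squeeze

lemma eq_zero_and_eq_zero_or_sq_add_mul_sq_pos {τ : ℝ} (hτ : 0 < τ) (a b : ℝ) :
    (a = 0 ∧ b = 0) ∨ 0 < a ^ 2 + τ * b ^ 2 := by
  by_cases ha : a = 0
  · by_cases hb : b = 0
    · exact Or.inl ⟨ha, hb⟩
    · exact Or.inr (by have := sq_pos_of_ne_zero hb; positivity)
  · exact Or.inr (by have := sq_pos_of_ne_zero ha; positivity)

section WeightedModulus

variable {E : Type*} {f g : E → ℝ} {τ : ℝ}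

def weightedModulus (τ : ℝ) (f g : E → ℝ) (x : E) : ℝ := √(f x ^ 2 + τ * g x ^ 2)

lemma weightedModulus_sq (hτ : 0 ≤ τ) (x : E) :
    weightedModulus τ f g x ^ 2 = f x ^ 2 + τ * g x ^ 2 :=
  Real.sq_sqrt (by positivity)

variable [NormedAddCommGroup E] [NormedSpace ℝ E]

/-- At a common zero of `f` and `g` this is `0`, since `(√0)⁻¹ = 0`; that is the right value
there when `f` and `g` are nonnegative. -/
def weightedModulusFDeriv (τ : ℝ) (f g : E → ℝ) (x : E) : E →L[ℝ] ℝ :=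
  (√(f x ^ 2 + τ * g x ^ 2))⁻¹ • (f x • fderiv ℝ f x + (τ * g x) • fderiv ℝ g x)

lemma weightedModulusFDeriv_of_eq_zero (hf0 : ∀ y, 0 ≤ f y) (hg0 : ∀ y, 0 ≤ g y) {x : E}
    (hfx : f x = 0) (hgx : g x = 0) : weightedModulusFDeriv τ f g x = 0 := by
  simp [weightedModulusFDeriv, fderiv_eq_zero_of_nonneg_of_eq_zero hf0 hfx,
    fderiv_eq_zero_of_nonneg_of_eq_zero hg0 hgx]

variable (hτ : 0 < τ) (hf0 : ∀ y, 0 ≤ f y) (hg0 : ∀ y, 0 ≤ g y)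
include hτ hf0 hg0

lemma hasFDerivAt_weightedModulus (hf : Differentiable ℝ f) (hg : Differentiable ℝ g) (x : E) :
    HasFDerivAt (weightedModulus τ f g) (weightedModulusFDeriv τ f g x) x := by
  rcases eq_zero_and_eq_zero_or_sq_add_mul_sq_pos hτ (f x) (g x) with ⟨hfx, hgx⟩ | hD
  · rw [weightedModulusFDeriv_of_eq_zero hf0 hg0 hfx hgx]
    have hψ : HasFDerivAt (fun y => f y + √τ * g y) (0 : E →L[ℝ] ℝ) x := by
      simpa [fderiv_eq_zero_of_nonneg_of_eq_zero hf0 hfx,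
        fderiv_eq_zero_of_nonneg_of_eq_zero hg0 hgx] using
        (hf x).hasFDerivAt.fun_add ((hg x).hasFDerivAt.const_mul √τ)
    refine hasFDerivAt_zero_of_nonneg_of_le (fun y => Real.sqrt_nonneg _) (fun y => ?_)
      (by simp [hfx, hgx]) hψ
    have hsqrt := Real.sq_sqrt hτ.le
    refine (Real.sqrt_le_left (add_nonneg (hf0 y) (mul_nonneg (Real.sqrt_nonneg τ) (hg0 y)))).2 ?_
    nlinarith [mul_nonneg (mul_nonneg (Real.sqrt_nonneg τ) (hf0 y)) (hg0 y)]
  · have hD' := ((hf x).hasFDerivAt.pow 2).fun_add (((hg x).hasFDerivAt.pow 2).const_mul τ)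
    refine ((Real.hasDerivAt_sqrt hD.ne').comp_hasFDerivAt x hD').congr_fderiv ?_
    simp only [weightedModulusFDeriv]
    module

lemma norm_weightedModulusFDeriv_le (x : E) :
    ‖weightedModulusFDeriv τ f g x‖ ≤ ‖fderiv ℝ f x‖ + √τ * ‖fderiv ℝ g x‖ := by
  set W := √(f x ^ 2 + τ * g x ^ 2)
  rcases (Real.sqrt_nonneg (f x ^ 2 + τ * g x ^ 2)).eq_or_lt with hW | hW
  · simp only [weightedModulusFDeriv, ← hW, inv_zero, zero_smul, norm_zero]
    positivity
  have hfW : f x ≤ W := Real.le_sqrt_of_sq_le (by nlinarith [sq_nonneg (g x)])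
  have hgW : √τ * g x ≤ W :=
    Real.le_sqrt_of_sq_le (by rw [mul_pow, Real.sq_sqrt hτ.le]; nlinarith [sq_nonneg (f x)])
  have hτg : τ * g x = √τ * (√τ * g x) := by rw [← mul_assoc, Real.mul_self_sqrt hτ.le]
  calc ‖weightedModulusFDeriv τ f g x‖
      ≤ W⁻¹ * (f x * ‖fderiv ℝ f x‖ + (√τ * (√τ * g x)) * ‖fderiv ℝ g x‖) := by
        rw [weightedModulusFDeriv, norm_smul, Real.norm_of_nonneg (inv_nonneg.2 hW.le), ← hτg]
        refine mul_le_mul_of_nonneg_left ((norm_add_le _ _).trans_eq ?_) (inv_nonneg.2 hW.le)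
        rw [norm_smul, norm_smul, Real.norm_of_nonneg (hf0 x),
          Real.norm_of_nonneg (mul_nonneg hτ.le (hg0 x))]
    _ ≤ ‖fderiv ℝ f x‖ + √τ * ‖fderiv ℝ g x‖ := by
        rw [inv_mul_le_iff₀ hW]
        nlinarith [mul_le_mul_of_nonneg_right hfW (norm_nonneg (fderiv ℝ f x)),
          mul_le_mul_of_nonneg_right hgW
            (mul_nonneg (Real.sqrt_nonneg τ) (norm_nonneg (fderiv ℝ g x)))]

lemma continuous_weightedModulusFDeriv (hf : ContDiff ℝ 1 f) (hg : ContDiff ℝ 1 g) :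
    Continuous (weightedModulusFDeriv τ f g) := by
  have hf' : Continuous (fderiv ℝ f) := hf.continuous_fderiv one_ne_zero
  have hg' : Continuous (fderiv ℝ g) := hg.continuous_fderiv one_ne_zero
  refine continuous_iff_continuousAt.2 fun x => ?_
  rcases eq_zero_and_eq_zero_or_sq_add_mul_sq_pos hτ (f x) (g x) with ⟨hfx, hgx⟩ | hD
  · rw [ContinuousAt, weightedModulusFDeriv_of_eq_zero hf0 hg0 hfx hgx]
    refine squeeze_zero_norm (norm_weightedModulusFDeriv_le hτ hf0 hg0) ?_
    simpa [fderiv_eq_zero_of_nonneg_of_eq_zero hf0 hfx,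
      fderiv_eq_zero_of_nonneg_of_eq_zero hg0 hgx] using
      ((by fun_prop : Continuous fun y => ‖fderiv ℝ f y‖ + √τ * ‖fderiv ℝ g y‖).tendsto x)
  · have hD' : Continuous fun y => f y ^ 2 + τ * g y ^ 2 := by fun_prop
    exact ((Real.continuous_sqrt.comp hD').continuousAt.inv₀ (Real.sqrt_pos.2 hD).ne').smul
      ((hf.continuous.continuousAt.smul hf'.continuousAt).add
        ((continuous_const.mul hg.continuous).continuousAt.smul hg'.continuousAt))

lemma contDiff_weightedModulus (hf : ContDiff ℝ 1 f) (hg : ContDiff ℝ 1 g) :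
    ContDiff ℝ 1 (weightedModulus τ f g) := by
  have hW := hasFDerivAt_weightedModulus hτ hf0 hg0 (hf.differentiable one_ne_zero)
    (hg.differentiable one_ne_zero)
  rw [contDiff_one_iff_fderiv, funext fun x => (hW x).fderiv]
  exact ⟨fun x => (hW x).differentiableAt, continuous_weightedModulusFDeriv hτ hf0 hg0 hf hg⟩

end WeightedModulus

section Gradient

variable {F : Type*} [NormedAddCommGroup F] [InnerProductSpace ℝ F] [CompleteSpace F]

lemma gradient_const_mul (c : ℝ) (h : F → ℝ) (x : F) :
    gradient (fun y => c * h y) x = c • gradient h x := by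
  rw [gradient, show (fun y => c * h y) = c • h from rfl, fderiv_const_smul_field, Pi.smul_apply,
    map_smul, gradient]

lemma norm_gradient_const_mul_sq (c : ℝ) (h : F → ℝ) (x : F) :
    ‖gradient (fun y => c * h y) x‖ ^ 2 = c ^ 2 * ‖gradient h x‖ ^ 2 := by
  rw [gradient_const_mul, norm_smul, mul_pow, Real.norm_eq_abs, sq_abs]

lemma ContDiff.continuous_gradient {h : F → ℝ} (hh : ContDiff ℝ 1 h) :
    Continuous (gradient h) :=
  (InnerProductSpace.toDual ℝ F).symm.continuous.comp (hh.continuous_fderiv one_ne_zero)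

variable {f g : F → ℝ} {τ : ℝ} (hτ : 0 < τ) (hf0 : ∀ y, 0 ≤ f y) (hg0 : ∀ y, 0 ≤ g y)
  (hf : Differentiable ℝ f) (hg : Differentiable ℝ g)
include hτ hf0 hg0 hf hg

lemma gradient_weightedModulus (x : F) :
    gradient (weightedModulus τ f g) x
      = (√(f x ^ 2 + τ * g x ^ 2))⁻¹ • (f x • gradient f x + (τ * g x) • gradient g x) := by
  rw [gradient, (hasFDerivAt_weightedModulus hτ hf0 hg0 hf hg x).fderiv, weightedModulusFDeriv]
  simp only [map_smul, map_add, gradient]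

lemma norm_gradient_weightedModulus_sq (x : F) :
    ‖gradient (weightedModulus τ f g) x‖ ^ 2
      = ‖gradient f x‖ ^ 2 + τ * ‖gradient g x‖ ^ 2
        - τ * ‖f x • gradient g x - g x • gradient f x‖ ^ 2 / (f x ^ 2 + τ * g x ^ 2) := by
  rw [gradient_weightedModulus hτ hf0 hg0 hf hg, norm_smul, mul_pow, norm_inv,
    Real.norm_of_nonneg (Real.sqrt_nonneg _), inv_pow, Real.sq_sqrt (by positivity)]
  rcases eq_zero_and_eq_zero_or_sq_add_mul_sq_pos hτ (f x) (g x) with ⟨hfx, hgx⟩ | hD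
  · have hf' : gradient f x = 0 := by simp [gradient, fderiv_eq_zero_of_nonneg_of_eq_zero hf0 hfx]
    have hg' : gradient g x = 0 := by simp [gradient, fderiv_eq_zero_of_nonneg_of_eq_zero hg0 hgx]
    simp [hf', hg']
  · rw [eq_sub_iff_add_eq, ← div_eq_inv_mul, ← add_div,
      norm_add_smul_sq_add_mul_norm_sub_smul_sq, mul_div_cancel_left₀ _ hD.ne']

end Gradient

lemma abs_pow_mul_pow_le_of_add_eq_four (a b : ℝ) {i j : ℕ} (hij : i + j = 4) :
    |a ^ i * b ^ j| ≤ a ^ 4 + b ^ 4 := by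
  have hm : max |a| |b| ^ 4 ≤ a ^ 4 + b ^ 4 := by
    have : 0 ≤ a ^ 4 := by positivity
    have : 0 ≤ b ^ 4 := by positivity
    rcases max_choice |a| |b| with h | h <;> rw [h, Even.pow_abs (by decide)] <;> linarith
  calc |a ^ i * b ^ j| = |a| ^ i * |b| ^ j := by rw [abs_mul, abs_pow, abs_pow]
    _ ≤ max |a| |b| ^ i * max |a| |b| ^ j := by
      gcongr
      · exact le_max_left _ _
      · exact le_max_right _ _
    _ ≤ a ^ 4 + b ^ 4 := by rwa [← pow_add, hij]

lemma integrable_pow_mul_pow_of_add_eq_four {α : Type*} [MeasurableSpace α] {μ : Measure α}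
    {u w : α → ℝ} (hu : AEStronglyMeasurable u μ) (hw : AEStronglyMeasurable w μ)
    (hu4 : Integrable (fun x => u x ^ 4) μ) (hw4 : Integrable (fun x => w x ^ 4) μ) {i j : ℕ}
    (hij : i + j = 4) : Integrable (fun x => u x ^ i * w x ^ j) μ :=
  (hu4.add hw4).mono' ((hu.pow i).mul (hw.pow j))
    (Eventually.of_forall fun x => abs_pow_mul_pow_le_of_add_eq_four (u x) (w x) hij)

def energyDensity (V : E3 → ℝ) (βn βs q : ℝ) (u1 u0 um1 : E3 → ℝ) (x : E3) : ℝ :=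
  ‖gradient u1 x‖ ^ 2 + ‖gradient u0 x‖ ^ 2 + ‖gradient um1 x‖ ^ 2
    + V x * nsq u1 u0 um1 x
    + βn * (nsq u1 u0 um1 x) ^ 2
    + βs * (2 * u0 x ^ 2 * (u1 x - um1 x) ^ 2 + (u1 x ^ 2 - um1 x ^ 2) ^ 2)
    + q * (u1 x ^ 2 + um1 x ^ 2)

lemma energy_eq_integral_energyDensity (V : E3 → ℝ) (βn βs q : ℝ) (u1 u0 um1 : E3 → ℝ) :
    energy V βn βs q u1 u0 um1 = ∫ x, energyDensity V βn βs q u1 u0 um1 x :=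
  rfl

/-- The integrand of `d/dε ℰ_q[v_ε]` at `ε = 0`. -/
def firstVariationDensity (βs q τ : ℝ) (z1 zm1 : E3 → ℝ) (x : E3) : ℝ :=
  4 * βs * (z1 x * zm1 x * (z1 x - zm1 x) * (τ * zm1 x - z1 x))
    - τ * Sfun z1 zm1 x / (z1 x ^ 2 + τ * zm1 x ^ 2) - q * (z1 x ^ 2 + τ * zm1 x ^ 2)

lemma Admissible.integrable_quartic {V : E3 → ℝ} {M : ℝ} {u1 u0 um1 : E3 → ℝ}
    (hu : Admissible V M u1 u0 um1) (a b c d e : ℝ) :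
    Integrable fun x => a * u1 x ^ 4 + b * (u1 x ^ 3 * um1 x) + c * (u1 x ^ 2 * um1 x ^ 2)
      + d * (u1 x * um1 x ^ 3) + e * um1 x ^ 4 := by
  have hmono {i j : ℕ} (hij : i + j = 4) : Integrable fun x => u1 x ^ i * um1 x ^ j :=
    integrable_pow_mul_pow_of_add_eq_four hu.smooth1.continuous.aestronglyMeasurable
      hu.smoothm1.continuous.aestronglyMeasurable hu.l4_1 hu.l4_m1 hij
  have h31 : Integrable fun x => u1 x ^ 3 * um1 x := by simpa using hmono (i := 3) (j := 1) rfl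
  have h13 : Integrable fun x => u1 x * um1 x ^ 3 := by simpa using hmono (i := 1) (j := 3) rfl
  exact ((((hu.l4_1.const_mul a).add (h31.const_mul b)).add
    ((hmono (i := 2) (j := 2) rfl).const_mul c)).add (h13.const_mul d)).add (hu.l4_m1.const_mul e)

lemma nsq_transfer {τ ε : ℝ} (hτ : 0 ≤ τ) (hε0 : 0 ≤ ε) (hε1 : ε ≤ 1) (hετ : ε * τ ≤ 1)
    (z1 zm1 : E3 → ℝ) (x : E3) :
    nsq (fun x => √(1 - ε) * z1 x) (fun x => √ε * weightedModulus τ z1 zm1 x)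
      (fun x => √(1 - ε * τ) * zm1 x) x = nsq z1 (fun _ => 0) zm1 x := by
  simp only [nsq, mul_pow, Real.sq_sqrt hε0, Real.sq_sqrt (sub_nonneg.2 hε1),
    Real.sq_sqrt (sub_nonneg.2 hετ), weightedModulus_sq hτ]
  ring

section TwoComponent

variable {V : E3 → ℝ} {M τ : ℝ} {z1 zm1 : E3 → ℝ} (hz : Admissible V M z1 (fun _ => 0) zm1)
include hz

lemma Admissible.integral_sq_eq :
    ∫ x, z1 x ^ 2 = (1 + M) / 2 ∧ ∫ x, zm1 x ^ 2 = (1 - M) / 2 := by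
  have hmass := hz.mass
  have hmag := hz.magnetization
  simp only [nsq, ne_eq, OfNat.ofNat_ne_zero, not_false_eq_true, zero_pow, add_zero] at hmass
  rw [integral_add hz.l2_1 hz.l2_m1] at hmass
  rw [integral_sub hz.l2_1 hz.l2_m1] at hmag
  constructor <;> linarith

lemma Admissible.integrable_energyDensity (βn βs q : ℝ) :
    Integrable (energyDensity V βn βs q z1 (fun _ => 0) zm1) := by
  refine ((((hz.grad2_1.add hz.grad2_m1).add hz.pot).add
    (hz.integrable_quartic (βn + βs) 0 (2 * (βn - βs)) 0 (βn + βs))).add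
    ((hz.l2_1.add hz.l2_m1).const_mul q)).congr (Eventually.of_forall fun x => ?_)
  simp only [energyDensity, nsq, Pi.add_apply, gradient_fun_const, norm_zero]
  ring

variable (hτ : 0 < τ)
include hτ

lemma Admissible.contDiff_weightedModulus : ContDiff ℝ 1 (weightedModulus τ z1 zm1) :=
  _root_.contDiff_weightedModulus hτ hz.nonneg1 hz.nonnegm1 hz.smooth1 hz.smoothm1

lemma Admissible.norm_gradient_weightedModulus_sq (x : E3) :
    ‖gradient (weightedModulus τ z1 zm1) x‖ ^ 2
      = ‖gradient z1 x‖ ^ 2 + τ * ‖gradient zm1 x‖ ^ 2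
        - τ * Sfun z1 zm1 x / (z1 x ^ 2 + τ * zm1 x ^ 2) :=
  _root_.norm_gradient_weightedModulus_sq hτ hz.nonneg1 hz.nonnegm1
    (hz.smooth1.differentiable one_ne_zero) (hz.smoothm1.differentiable one_ne_zero) x

lemma Admissible.integrable_norm_gradient_weightedModulus_sq :
    Integrable fun x => ‖gradient (weightedModulus τ z1 zm1) x‖ ^ 2 := by
  refine (hz.grad2_1.add (hz.grad2_m1.const_mul τ)).mono'
    (((hz.contDiff_weightedModulus hτ).continuous_gradient.norm.pow 2).aestronglyMeasurable)
    (Eventually.of_forall fun x => ?_)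
  have : 0 ≤ τ * Sfun z1 zm1 x / (z1 x ^ 2 + τ * zm1 x ^ 2) := by unfold Sfun; positivity
  rw [norm_pow, norm_norm, hz.norm_gradient_weightedModulus_sq hτ]
  simp only [Pi.add_apply]
  linarith

lemma Admissible.integrable_mul_Sfun_div :
    Integrable fun x => τ * Sfun z1 zm1 x / (z1 x ^ 2 + τ * zm1 x ^ 2) := by
  refine ((hz.grad2_1.add (hz.grad2_m1.const_mul τ)).sub
    (hz.integrable_norm_gradient_weightedModulus_sq hτ)).congr (Eventually.of_forall fun x => ?_)
  simp only [Pi.add_apply, Pi.sub_apply, hz.norm_gradient_weightedModulus_sq hτ]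
  ring


lemma Admissible.integrable_firstVariationDensity (βs q : ℝ) :
    Integrable (firstVariationDensity βs q τ z1 zm1) := by
  refine (((hz.integrable_quartic 0 (-(4 * βs)) (4 * βs * (1 + τ)) (-(4 * βs * τ)) 0).sub
    (hz.integrable_mul_Sfun_div hτ)).sub
    ((hz.l2_1.add (hz.l2_m1.const_mul τ)).const_mul q)).congr (Eventually.of_forall fun x => ?_)
  simp only [firstVariationDensity, Pi.sub_apply, Pi.add_apply]
  ring

lemma Admissible.integral_firstVariationDensity (hτM : τ * (1 - M) = 1 + M) (βs q : ℝ) :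
    ∫ x, firstVariationDensity βs q τ z1 zm1 x
      = 4 * βs * (∫ x, z1 x * zm1 x * (z1 x - zm1 x) * (τ * zm1 x - z1 x))
        - (∫ x, τ * Sfun z1 zm1 x / (z1 x ^ 2 + τ * zm1 x ^ 2)) - q * (1 + M) := by
  have hmix : Integrable fun x => z1 x * zm1 x * (z1 x - zm1 x) * (τ * zm1 x - z1 x) :=
    (hz.integrable_quartic 0 (-1) (1 + τ) (-τ) 0).congr (Eventually.of_forall fun x => by ring)
  have hSq := hz.integrable_mul_Sfun_div hτ
  have hgain : Integrable fun x => 4 * βs * (z1 x * zm1 x * (z1 x - zm1 x) * (τ * zm1 x - z1 x))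
      - τ * Sfun z1 zm1 x / (z1 x ^ 2 + τ * zm1 x ^ 2) := (hmix.const_mul _).sub hSq
  have hzeeman : Integrable fun x => q * (z1 x ^ 2 + τ * zm1 x ^ 2) :=
    (hz.l2_1.add (hz.l2_m1.const_mul τ)).const_mul q
  obtain ⟨hP, hQ⟩ := hz.integral_sq_eq
  unfold firstVariationDensity
  rw [integral_sub hgain hzeeman,
    integral_sub (hmix.const_mul _) hSq, integral_const_mul, integral_const_mul,
    integral_add hz.l2_1 (hz.l2_m1.const_mul τ), integral_const_mul, hP, hQ]
  linear_combination (-q / 2) * hτM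

variable {ε : ℝ} (hε0 : 0 ≤ ε) (hε1 : ε ≤ 1) (hετ : ε * τ ≤ 1)
include hε0 hε1 hετ

lemma Admissible.transfer (hτM : τ * (1 - M) = 1 + M) :
    Admissible V M (fun x => √(1 - ε) * z1 x) (fun x => √ε * weightedModulus τ z1 zm1 x)
      (fun x => √(1 - ε * τ) * zm1 x) := by
  have h1 : √(1 - ε) ^ 2 = 1 - ε := Real.sq_sqrt (sub_nonneg.2 hε1)
  have h0 : √ε ^ 2 = ε := Real.sq_sqrt hε0
  have hm1 : √(1 - ε * τ) ^ 2 = 1 - ε * τ := Real.sq_sqrt (sub_nonneg.2 hετ)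
  have hW := weightedModulus_sq hτ.le (f := z1) (g := zm1)
  have hnsq := nsq_transfer hτ.le hε0 hε1 hετ z1 zm1
  obtain ⟨hP, hQ⟩ := hz.integral_sq_eq
  refine ⟨contDiff_const.mul hz.smooth1, contDiff_const.mul (hz.contDiff_weightedModulus hτ),
    contDiff_const.mul hz.smoothm1, fun x => mul_nonneg (Real.sqrt_nonneg _) (hz.nonneg1 x),
    fun x => mul_nonneg (Real.sqrt_nonneg _) (Real.sqrt_nonneg _),
    fun x => mul_nonneg (Real.sqrt_nonneg _) (hz.nonnegm1 x), ?_, ?_, ?_, ?_, ?_, ?_, ?_, ?_, ?_,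
    hz.pot.congr (Eventually.of_forall fun x => by simp only [hnsq]),
    by simpa only [hnsq] using hz.mass, ?_⟩
  · simpa only [mul_pow, h1] using hz.l2_1.const_mul (1 - ε)
  · simpa only [mul_pow, h0, hW, Pi.add_apply] using
      (hz.l2_1.add (hz.l2_m1.const_mul τ)).const_mul ε
  · simpa only [mul_pow, hm1] using hz.l2_m1.const_mul (1 - ε * τ)
  · simpa only [norm_gradient_const_mul_sq, h1] using hz.grad2_1.const_mul (1 - ε)
  · simpa only [norm_gradient_const_mul_sq, h0] using
      (hz.integrable_norm_gradient_weightedModulus_sq hτ).const_mul ε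
  · simpa only [norm_gradient_const_mul_sq, hm1] using hz.grad2_m1.const_mul (1 - ε * τ)
  · simpa only [mul_pow] using hz.l4_1.const_mul (√(1 - ε) ^ 4)
  · refine (hz.integrable_quartic (ε ^ 2) 0 (2 * ε ^ 2 * τ) 0 (ε ^ 2 * τ ^ 2)).congr
      (Eventually.of_forall fun x => ?_)
    have : (√ε * weightedModulus τ z1 zm1 x) ^ 4
        = (√ε ^ 2 * weightedModulus τ z1 zm1 x ^ 2) ^ 2 := by ring
    beta_reduce
    rw [this, h0, hW]
    ring
  · simpa only [mul_pow] using hz.l4_m1.const_mul (√(1 - ε * τ) ^ 4)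
  · simp only [mul_pow, h1, hm1]
    rw [integral_sub (hz.l2_1.const_mul _) (hz.l2_m1.const_mul _), integral_const_mul,
      integral_const_mul, hP, hQ]
    linear_combination (ε / 2) * hτM

lemma Admissible.energyDensity_transfer (βn βs q : ℝ) (x : E3) :
    energyDensity V βn βs q (fun x => √(1 - ε) * z1 x)
        (fun x => √ε * weightedModulus τ z1 zm1 x) (fun x => √(1 - ε * τ) * zm1 x) x
      = energyDensity V βn βs q z1 (fun _ => 0) zm1 x
        + ε * (firstVariationDensity βs q τ z1 zm1 x
          - ε * βs * ((z1 x ^ 2 + τ * zm1 x ^ 2) ^ 2 + 4 * τ * (z1 x ^ 2 * zm1 x ^ 2))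
          - 4 * βs * (√(1 - ε) * √(1 - ε * τ) - 1)
            * ((z1 x ^ 2 + τ * zm1 x ^ 2) * (z1 x * zm1 x))) := by
  have h1 : √(1 - ε) ^ 2 = 1 - ε := Real.sq_sqrt (sub_nonneg.2 hε1)
  have h0 : √ε ^ 2 = ε := Real.sq_sqrt hε0
  have hm1 : √(1 - ε * τ) ^ 2 = 1 - ε * τ := Real.sq_sqrt (sub_nonneg.2 hετ)
  simp only [energyDensity, firstVariationDensity, nsq_transfer hτ.le hε0 hε1 hετ,
    norm_gradient_const_mul_sq, hz.norm_gradient_weightedModulus_sq hτ, gradient_fun_const,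
    norm_zero, sub_sq, mul_pow, h1, h0, hm1, weightedModulus_sq hτ.le]
  ring


lemma Admissible.energy_transfer (βn βs q : ℝ) :
    energy V βn βs q (fun x => √(1 - ε) * z1 x) (fun x => √ε * weightedModulus τ z1 zm1 x)
        (fun x => √(1 - ε * τ) * zm1 x)
      = energy V βn βs q z1 (fun _ => 0) zm1
        + ε * ((∫ x, firstVariationDensity βs q τ z1 zm1 x)
          - ε * βs * (∫ x, (z1 x ^ 2 + τ * zm1 x ^ 2) ^ 2 + 4 * τ * (z1 x ^ 2 * zm1 x ^ 2))
          - 4 * βs * (√(1 - ε) * √(1 - ε * τ) - 1)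
            * ∫ x, (z1 x ^ 2 + τ * zm1 x ^ 2) * (z1 x * zm1 x)) := by
  have hA := hz.integrable_firstVariationDensity hτ βs q
  have hB : Integrable fun x => (z1 x ^ 2 + τ * zm1 x ^ 2) ^ 2 + 4 * τ * (z1 x ^ 2 * zm1 x ^ 2) :=
    (hz.integrable_quartic 1 0 (6 * τ) 0 (τ ^ 2)).congr (Eventually.of_forall fun x => by ring)
  have hC : Integrable fun x => (z1 x ^ 2 + τ * zm1 x ^ 2) * (z1 x * zm1 x) :=
    (hz.integrable_quartic 0 1 0 τ 0).congr (Eventually.of_forall fun x => by ring)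
  have hAB : Integrable fun x => firstVariationDensity βs q τ z1 zm1 x
      - ε * βs * ((z1 x ^ 2 + τ * zm1 x ^ 2) ^ 2 + 4 * τ * (z1 x ^ 2 * zm1 x ^ 2)) :=
    hA.sub (hB.const_mul _)
  have hABC : Integrable fun x => firstVariationDensity βs q τ z1 zm1 x
      - ε * βs * ((z1 x ^ 2 + τ * zm1 x ^ 2) ^ 2 + 4 * τ * (z1 x ^ 2 * zm1 x ^ 2))
      - 4 * βs * (√(1 - ε) * √(1 - ε * τ) - 1)
        * ((z1 x ^ 2 + τ * zm1 x ^ 2) * (z1 x * zm1 x)) :=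
    hAB.sub (hC.const_mul _)
  simp only [energy_eq_integral_energyDensity, hz.energyDensity_transfer hτ hε0 hε1 hετ]
  rw [integral_add (hz.integrable_energyDensity βn βs q) (hABC.const_mul ε), integral_const_mul,
    integral_sub hAB (hC.const_mul _), integral_sub hA (hB.const_mul _), integral_const_mul,
    integral_const_mul]

end TwoComponent

theorem two_component_ground_state_inequality_general (V : E3 → ℝ) (βn βs q M : ℝ)
    (hM0 : 0 < M) (hM1 : M < 1) (z1 zm1 : E3 → ℝ) (τ : ℝ) (hτ : τ = (1 + M) / (1 - M))
    (hadm : Admissible V M z1 (fun _ => 0) zm1)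
    (hfullmin : ∀ v1 v0 vm1 : E3 → ℝ, Admissible V M v1 v0 vm1 →
      energy V βn βs q z1 (fun _ => 0) zm1 ≤ energy V βn βs q v1 v0 vm1) :
    Integrable (fun x => τ * Sfun z1 zm1 x / (z1 x ^ 2 + τ * zm1 x ^ 2)) ∧
    4 * βs * (∫ x : E3, z1 x * zm1 x * (z1 x - zm1 x) * (τ * zm1 x - z1 x))
      ≥ q * (1 + M)
        + ∫ x : E3, τ * Sfun z1 zm1 x / (z1 x ^ 2 + τ * zm1 x ^ 2) := by
  have hτpos : 0 < τ := hτ ▸ div_pos (by linarith) (by linarith)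
  have hτM : τ * (1 - M) = 1 + M := by rw [hτ]; field_simp [(by linarith : (1 - M) ≠ 0)]
  refine ⟨hadm.integrable_mul_Sfun_div hτpos, ?_⟩
  set A := ∫ x, firstVariationDensity βs q τ z1 zm1 x with hAdef
  set B := ∫ x, (z1 x ^ 2 + τ * zm1 x ^ 2) ^ 2 + 4 * τ * (z1 x ^ 2 * zm1 x ^ 2)
  set C := ∫ x, (z1 x ^ 2 + τ * zm1 x ^ 2) * (z1 x * zm1 x)
  have hsmall : ∀ᶠ ε in 𝓝[>] (0 : ℝ), 0 < ε ∧ ε ≤ 1 ∧ ε * τ ≤ 1 :=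
    eventually_mem_nhdsWithin.and (nhdsWithin_le_nhds ((eventually_le_nhds one_pos).and
      ((continuous_mul_const τ).tendsto' 0 0 (zero_mul τ) |>.eventually
        (eventually_le_nhds one_pos))))
  have hlim : Tendsto (fun ε : ℝ => A - ε * βs * B - 4 * βs * (√(1 - ε) * √(1 - ε * τ) - 1) * C)
      (𝓝[>] 0) (𝓝 A) := by
    have hcont : Continuous fun ε : ℝ =>
        A - ε * βs * B - 4 * βs * (√(1 - ε) * √(1 - ε * τ) - 1) * C := by
      fun_prop
    simpa using (hcont.tendsto 0).mono_left nhdsWithin_le_nhds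
  have hA : 0 ≤ A := ge_of_tendsto hlim (hsmall.mono fun ε ⟨hε0, hε1, hετ⟩ => by
    have hmin := hfullmin _ _ _ (hadm.transfer hτpos hε0.le hε1 hετ hτM)
    rw [hadm.energy_transfer hτpos hε0.le hε1 hετ] at hmin
    exact (mul_nonneg_iff_of_pos_left hε0).1 (by linarith))
  rw [hAdef, hadm.integral_firstVariationDensity hτpos hτM] at hA
  linarith

/-- the inequality satisfied by a two-component ground state `z`
that is also a ground state of the full problem. -/
theorem two_component_ground_state_inequality (V : E3 → ℝ) (βn βs q M : ℝ)
    (hV : TrapPotential V) (hβn : 0 < βn) (hβs : 0 < βs) (hq : 0 ≤ q)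
    (hM0 : 0 < M) (hM1 : M < 1) (z1 zm1 : E3 → ℝ) (τ : ℝ) (hτ : τ = (1 + M) / (1 - M))
    (hadm : Admissible V M z1 (fun _ => 0) zm1)
    (htwomin : ∀ v1 vm1 : E3 → ℝ, Admissible V M v1 (fun _ => 0) vm1 →
      energy V βn βs q z1 (fun _ => 0) zm1 ≤ energy V βn βs q v1 (fun _ => 0) vm1)
    (hfullmin : ∀ v1 v0 vm1 : E3 → ℝ, Admissible V M v1 v0 vm1 →
      energy V βn βs q z1 (fun _ => 0) zm1 ≤ energy V βn βs q v1 v0 vm1) :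
    Integrable (fun x => τ * Sfun z1 zm1 x / (z1 x ^ 2 + τ * zm1 x ^ 2)) ∧
    4 * βs * (∫ x : E3, z1 x * zm1 x * (z1 x - zm1 x) * (τ * zm1 x - z1 x))
      ≥ q * (1 + M)
        + ∫ x : E3, τ * Sfun z1 zm1 x / (z1 x ^ 2 + τ * zm1 x ^ 2) :=
  two_component_ground_state_inequality_general V βn βs q M hM0 hM1 z1 zm1 τ hτ hadm hfullmin
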